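/- arXiv:math/0605305 — 9 statements merged into one kernel-verified Lean document; each statement's English description precedes it below -/
import Mathlib

section
/- In the polynomial ring ℤ[a₁,a₂,b] in three variables with integer coefficients, the element (b + a₁ + a₂)³ − (a₁ + a₂)³ − b³ does not belong to the ideal generated by a₁², a₂² and b². -/
open MvPolynomial

local notation "mm" => (Finsupp.single 0 1 + Finsupp.single 1 1 + Finsupp.single 2 1 : Fin 3 →₀ ℕ)

lemma aux_coeff_zero (i : Fin 3) (p : MvPolynomial (Fin 3) ℤ) :
    coeff mm (p * X i ^ 2) = 0 := by
  rw [X_pow_eq_monomial, coeff_mul_monomial']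
  rw [if_neg]
  intro h
  have := h i
  simp [Finsupp.single_apply] at this
  fin_cases i <;> simp_all

lemma aux_coeff6 : coeff mm ((X 2 + X 0 + X 1) ^ 3 - (X 0 + X 1) ^ 3 - (X 2) ^ 3
    - (3 * X 2) * X 0 ^ 2 - (3 * X 2) * X 1 ^ 2 - (3 * (X 0 + X 1)) * X 2 ^ 2
    : MvPolynomial (Fin 3) ℤ) = 6 := by
  have hX : (X 0 * X 1 * X 2 : MvPolynomial (Fin 3) ℤ) = monomial mm 1 := by
    rw [X, X, X, monomial_mul, monomial_mul]
    simp
  have h2 : ((X 2 + X 0 + X 1) ^ 3 - (X 0 + X 1) ^ 3 - (X 2) ^ 3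
      - (3 * X 2) * X 0 ^ 2 - (3 * X 2) * X 1 ^ 2 - (3 * (X 0 + X 1)) * X 2 ^ 2
      : MvPolynomial (Fin 3) ℤ) = 6 * (X 0 * X 1 * X 2) := by ring
  rw [h2, hX, show (6 : MvPolynomial (Fin 3) ℤ) = C 6 by simp, coeff_C_mul,
    coeff_monomial, if_pos rfl]
  ring

/-- In ℤ[a₁,a₂,b], the element (b + a₁ + a₂)³ − (a₁ + a₂)³ − b³ does not belong to
the ideal generated by a₁², a₂² and b². Here a₁ = X 0, a₂ = X 1, b = X 2. -/
theorem stmt_0 :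
    (X 2 + X 0 + X 1) ^ 3 - (X 0 + X 1) ^ 3 - (X 2) ^ 3 ∉
      Ideal.span ({X 0 ^ 2, X 1 ^ 2, X 2 ^ 2} : Set (MvPolynomial (Fin 3) ℤ)) := by
  intro hmem
  rw [show ({X 0 ^ 2, X 1 ^ 2, X 2 ^ 2} : Set (MvPolynomial (Fin 3) ℤ)) =
    insert (X 0 ^ 2) (insert (X 1 ^ 2) {X 2 ^ 2}) from rfl, Ideal.mem_span_insert] at hmem
  obtain ⟨p, z, hz, hx⟩ := hmem
  rw [Ideal.mem_span_insert] at hz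
  obtain ⟨q, w, hw, hz⟩ := hz
  rw [Ideal.mem_span_singleton] at hw
  obtain ⟨r, hr⟩ := hw
  rw [mul_comm] at hr
  have key := aux_coeff6
  rw [hx, hz, hr] at key
  simp only [coeff_sub, coeff_add, aux_coeff_zero] at key
  norm_num at key
end

section
/- In the polynomial ring ℤ[X], the element X² does not belong to the ideal generated by 2X² and X³. -/
open Polynomial

/-- In ℤ[X], X² does not belong to the ideal generated by 2X² and X³. -/
theorem stmt_5 :
    (X ^ 2 : Polynomial ℤ) ∉ Ideal.span ({2 * X ^ 2, X ^ 3} : Set (Polynomial ℤ)) := by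
  intro h
  rw [Ideal.mem_span_pair] at h
  obtain ⟨a, b, hab⟩ := h
  have h2 := congrArg (fun p => Polynomial.coeff p 2) hab
  simp only [coeff_add, mul_comm a, mul_comm b, mul_assoc] at h2
  rw [show (2 : Polynomial ℤ) * (X ^ 2 * a) = X ^ 2 * (2 * a) by ring] at h2
  rw [coeff_X_pow_mul, X_pow_mul, coeff_mul_X_pow'] at h2
  simp at h2
  omega
end

section
/- Let A be a group and d, c : A → A group homomorphisms satisfying d ∘ d = d, c ∘ d = d, d ∘ c = c and c ∘ c = c. Let M be a subgroup of A with d(M) ⊆ M and c(M) ⊆ M. Then (ker c) ∩ M = { k⁻¹·c(k) | k ∈ (ker d) ∩ M }. -/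
/-- Let `d, c : A → A` be group endomorphisms with `d ∘ d = d`, `c ∘ d = d`,
`d ∘ c = c`, `c ∘ c = c`, and `M` a subgroup of `A` closed under `d` and `c`.
Then `(ker c) ∩ M = { k⁻¹ · c k | k ∈ (ker d) ∩ M }`. -/
theorem stmt_8 {A : Type*} [Group A] (d c : A →* A)
    (hdd : ∀ a, d (d a) = d a) (hcd : ∀ a, c (d a) = d a)
    (hdc : ∀ a, d (c a) = c a) (hcc : ∀ a, c (c a) = c a)
    (M : Subgroup A) (hdM : ∀ m ∈ M, d m ∈ M) (hcM : ∀ m ∈ M, c m ∈ M) :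
    ((c.ker ⊓ M : Subgroup A) : Set A) =
      {x : A | ∃ k, k ∈ d.ker ⊓ M ∧ x = k⁻¹ * c k} := by
  ext x
  simp only [Subgroup.mem_inf, Set.mem_setOf_eq, SetLike.mem_coe,
    MonoidHom.mem_ker]
  constructor
  · rintro ⟨hx, hxM⟩
    refine ⟨d x * x⁻¹, ⟨?_, ?_⟩, ?_⟩
    · simp [hdd]
    · exact M.mul_mem (hdM x hxM) (M.inv_mem hxM)
    · simp [hcd, hx]
  · rintro ⟨k, ⟨hk, hkM⟩, rfl⟩
    constructor
    · simp [hcc]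
    · exact M.mul_mem (M.inv_mem hkM) (hcM k hkM)
end

section
/- Let G and C be groups, φ : G → Aut(C) an action of G on C by automorphisms, and ∂ : C → G a group homomorphism satisfying ∂(φ(g)(x)) = g·∂(x)·g⁻¹ for all g ∈ G, x ∈ C (a precrossed module). On the semidirect product C ⋊_φ G, the maps d(x, g) = (1, g) and c̃(x, g) = (1, ∂(x)·g) are group homomorphisms and satisfy d ∘ d = d, c̃ ∘ d = d, d ∘ c̃ = c̃ and c̃ ∘ c̃ = c̃. -/
/-- Given a precrossed module `(C, G, δ, φ)`, the maps `d (x, g) = (1, g)` and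
`c (x, g) = (1, δ x · g)` on the semidirect product `C ⋊[φ] G` are group
homomorphisms and satisfy `d ∘ d = d`, `c ∘ d = d`, `d ∘ c = c`, `c ∘ c = c`. -/
theorem stmt_9 {C G : Type*} [Group C] [Group G] (φ : G →* MulAut C) (δ : C →* G)
    (hpre : ∀ (g : G) (x : C), δ (φ g x) = g * δ x * g⁻¹)
    (d c : C ⋊[φ] G → C ⋊[φ] G)
    (hd : ∀ p, d p = ⟨1, p.right⟩)
    (hc : ∀ p, c p = ⟨1, δ p.left * p.right⟩) :
    (∀ p q, d (p * q) = d p * d q) ∧ (∀ p q, c (p * q) = c p * c q) ∧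
    (∀ p, d (d p) = d p) ∧ (∀ p, c (d p) = d p) ∧
    (∀ p, d (c p) = c p) ∧ (∀ p, c (c p) = c p) := by
  refine ⟨fun p q => ?_, fun p q => ?_, fun p => ?_, fun p => ?_, fun p => ?_, fun p => ?_⟩ <;>
    simp only [hd, hc, SemidirectProduct.mul_left, SemidirectProduct.mul_right,
      map_one, map_mul, hpre, one_mul, mul_one] <;>
    ext <;> simp [mul_assoc]
end

section
/- Let G, C, φ, ∂ be a precrossed module and let d(x, g) = (1, g) and c̃(x, g) = (1, ∂(x)·g) be the associated endomorphisms of the semidirect product C ⋊_φ G. Then the Peiffer identity holds, i.e., φ(∂(x))(y) = x·y·x⁻¹ for all x, y ∈ C, if and only if every element of ker d commutes with every element of ker c̃ in C ⋊_φ G. -/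
private lemma aux_inv_conj {C : Type*} [Group C] (e : MulAut C) (x : C) :
    (∀ y, e y = x * y * x⁻¹) ↔ (∀ y, e⁻¹ y = x⁻¹ * y * x) := by
  constructor <;> intro h y
  · have key : e (x⁻¹ * y * x) = y := by rw [h]; group
    calc (e⁻¹ : MulAut C) y = e⁻¹ (e (x⁻¹ * y * x)) := by rw [key]
    _ = x⁻¹ * y * x := e.symm_apply_apply _
  · have key : (e⁻¹ : MulAut C) (x * y * x⁻¹) = y := by rw [h]; group
    calc e y = e (e⁻¹ (x * y * x⁻¹)) := by rw [key]
    _ = x * y * x⁻¹ := e.apply_symm_apply _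

/-- For a precrossed module `(C, G, δ, φ)` with associated endomorphisms
`d (x, g) = (1, g)` and `c (x, g) = (1, δ x · g)` of `C ⋊[φ] G`, the Peiffer
identity `φ (δ x) y = x · y · x⁻¹` holds for all `x, y ∈ C` if and only if every
element of `ker d` commutes with every element of `ker c`. -/
theorem stmt_11 {C G : Type*} [Group C] [Group G] (φ : G →* MulAut C) (δ : C →* G)
    (hpre : ∀ (g : G) (x : C), δ (φ g x) = g * δ x * g⁻¹)
    (d c : C ⋊[φ] G → C ⋊[φ] G)
    (hd : ∀ p, d p = ⟨1, p.right⟩)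
    (hc : ∀ p, c p = ⟨1, δ p.left * p.right⟩) :
    (∀ x y : C, φ (δ x) y = x * y * x⁻¹) ↔
      (∀ p q : C ⋊[φ] G, d p = 1 → c q = 1 → p * q = q * p) := by
  constructor
  · intro hP p q hdp hcq
    rw [hd] at hdp
    rw [hc] at hcq
    have hp : p.right = 1 := by
      have := congrArg SemidirectProduct.right hdp; simpa using this
    have hq : δ q.left * q.right = 1 := by
      have := congrArg SemidirectProduct.right hcq; simpa using this
    have hq' : q.right = (δ q.left)⁻¹ := by
      exact eq_inv_of_mul_eq_one_right hq
    have key : (φ (δ q.left))⁻¹ p.left = q.left⁻¹ * p.left * q.left :=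
      (aux_inv_conj (φ (δ q.left)) q.left).mp (hP q.left) p.left
    ext
    · simp only [SemidirectProduct.mul_left, hp, hq', map_one, MulAut.one_apply,
        map_inv, key]
      group
    · simp [SemidirectProduct.mul_right, hp]
  · intro h x y
    have := h ⟨y, 1⟩ ⟨x, (δ x)⁻¹⟩ (by rw [hd]; rfl) (by rw [hc]; ext <;> simp)
    have hl := congrArg SemidirectProduct.left this
    simp only [SemidirectProduct.mul_left, map_one, MulAut.one_apply] at hl
    -- hl : y * x = x * φ ((δ x)⁻¹) y
    have key : ∀ z, (φ (δ x))⁻¹ z = x⁻¹ * z * x := by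
      intro z
      have hz := congrArg SemidirectProduct.left
        (h ⟨z, 1⟩ ⟨x, (δ x)⁻¹⟩ (by rw [hd]; rfl) (by rw [hc]; ext <;> simp))
      simp only [SemidirectProduct.mul_left, map_one, MulAut.one_apply] at hz
      rw [← map_inv]
      calc φ ((δ x)⁻¹) z = x⁻¹ * (x * φ ((δ x)⁻¹) z) := by group
      _ = x⁻¹ * (z * x) := by rw [← hz]
      _ = x⁻¹ * z * x := by group
    exact (aux_inv_conj (φ (δ x)) x).mpr key y
end

section
/- Let A be a group and d, c : A → A group homomorphisms satisfying d ∘ d = d, c ∘ d = d, d ∘ c = c and c ∘ c = c. Let M and N be normal subgroups of A with d(M) ⊆ M, c(M) ⊆ M, d(N) ⊆ N, c(N) ⊆ N. Assume that every element of (ker d) ∩ N commutes with every element of (ker c) ∩ M, and that every element of (ker d) ∩ M commutes with every element of (ker c) ∩ N. Define v₀(x, y) = x⁻¹·d(x)·y⁻¹·c(y)·d(x)⁻¹·x·c(y)⁻¹·y. Then for all m₁, m₂ ∈ M and n₁, n₂ ∈ N one has v₀(m₁·n₁, m₂·n₂) = v₀(m₁, m₂)·v₀(n₁, n₂). -/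
/-- The basic term `v₀(x, y) = x⁻¹·d(x)·y⁻¹·c(y)·d(x)⁻¹·x·c(y)⁻¹·y` defining the
subvariety of crossed modules inside the variety `PXM` of precrossed modules. -/
def v₀ {A : Type*} [Group A] (d c : A → A) (x y : A) : A :=
  x⁻¹ * d x * y⁻¹ * c y * (d x)⁻¹ * x * (c y)⁻¹ * y

/-!
`v₀ d c x y` is the commutator `⁅x⁻¹ * d x, y⁻¹ * c y⁆` of an element of `ker d` with one of
`ker c`. For `x = m * n` the first entry is `n⁻¹ (m⁻¹ d m) n · (n⁻¹ d n)`, an element of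
`ker d ∩ M` times one of `ker d ∩ N`, and similarly for `y`. The commutation hypotheses let the
commutator of such products split as the `M`-commutator times the `N`-commutator, and they also
show that conjugating the `M`-entries by elements of `N` does not change their commutator.
-/

open scoped commutatorElement

section Group

variable {G : Type*} [Group G]

theorem commutatorElement_mul_mul_of_commute {x y b v : G} (hby : Commute b y)
    (hxv : Commute x v) (hx : Commute x ⁅b, v⁆) (hy : Commute y ⁅b, v⁆) :
    ⁅x * b, y * v⁆ = ⁅x, y⁆ * ⁅b, v⁆ := by
  calc ⁅x * b, y * v⁆ = x * (b * y) * v * b⁻¹ * (x⁻¹ * v⁻¹) * y⁻¹ := by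
        simp only [commutatorElement_def]; group
    _ = x * y * ⁅b, v⁆ * x⁻¹ * y⁻¹ := by
        rw [hby.eq, hxv.inv_inv.eq, commutatorElement_def]; group
    _ = x * y * (⁅b, v⁆ * x⁻¹) * y⁻¹ := by simp only [mul_assoc]
    _ = x * y * x⁻¹ * (⁅b, v⁆ * y⁻¹) := by rw [← hx.inv_left.eq]; simp only [mul_assoc]
    _ = ⁅x, y⁆ * ⁅b, v⁆ := by
        rw [← hy.inv_left.eq, commutatorElement_def x y]; simp only [mul_assoc]

theorem inv_mul_map_mul (f : G →* G) (m n : G) :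
    (m * n)⁻¹ * f (m * n) = n⁻¹ * (m⁻¹ * f m) * n * (n⁻¹ * f n) := by
  rw [map_mul]; group

theorem inv_mul_map_mem_ker_inf {f : G →* G} (hf : ∀ a, f (f a) = f a) {H : Subgroup G}
    (hfH : ∀ h ∈ H, f h ∈ H) {h : G} (hh : h ∈ H) : h⁻¹ * f h ∈ f.ker ⊓ H :=
  Subgroup.mem_inf.2 ⟨by simp [hf], mul_mem (inv_mem hh) (hfH h hh)⟩

theorem commutatorElement_mem_ker_inf {f : G →* G} {H : Subgroup G} {a b : G}
    (ha : a ∈ H) (hb : b ∈ H) (hab : f a = 1 ∨ f b = 1) : ⁅a, b⁆ ∈ f.ker ⊓ H := by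
  refine Subgroup.mem_inf.2 ⟨?_, ?_⟩
  · rcases hab with h | h <;> simp [map_commutatorElement, h]
  · rw [commutatorElement_def]
    exact mul_mem (mul_mem (mul_mem ha hb) (inv_mem ha)) (inv_mem hb)

end Group

section Precrossed

variable {A : Type*} [Group A] {d c : A →* A} {M N : Subgroup A}

theorem v₀_eq_commutatorElement (d c : A → A) (x y : A) :
    v₀ d c x y = ⁅x⁻¹ * d x, y⁻¹ * c y⁆ := by
  rw [v₀, commutatorElement_def]; group

theorem commutatorElement_mul_mul_of_mem_ker
    (hNM : ∀ k ∈ d.ker ⊓ N, ∀ l ∈ c.ker ⊓ M, Commute k l)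
    (hMN : ∀ k ∈ d.ker ⊓ M, ∀ l ∈ c.ker ⊓ N, Commute k l) {x b y v : A}
    (hx : x ∈ d.ker ⊓ M) (hb : b ∈ d.ker ⊓ N) (hy : y ∈ c.ker ⊓ M) (hv : v ∈ c.ker ⊓ N) :
    ⁅x * b, y * v⁆ = ⁅x, y⁆ * ⁅b, v⁆ := by
  have hbv_d : ⁅b, v⁆ ∈ d.ker ⊓ N := commutatorElement_mem_ker_inf hb.2 hv.2 (.inl hb.1)
  have hbv_c : ⁅b, v⁆ ∈ c.ker ⊓ N := commutatorElement_mem_ker_inf hb.2 hv.2 (.inr hv.1)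
  exact commutatorElement_mul_mul_of_commute (hNM b hb y hy) (hMN x hx v hv)
    (hMN x hx _ hbv_c) (hNM _ hbv_d y hy).symm

theorem commutatorElement_conj_conj_of_mem_ker [M.Normal] [N.Normal]
    (hNM : ∀ k ∈ d.ker ⊓ N, ∀ l ∈ c.ker ⊓ M, Commute k l)
    (hMN : ∀ k ∈ d.ker ⊓ M, ∀ l ∈ c.ker ⊓ N, Commute k l) {p q n n' : A}
    (hp : p ∈ d.ker ⊓ M) (hq : q ∈ c.ker ⊓ M) (hn : n ∈ N) (hn' : n' ∈ N) :
    ⁅n⁻¹ * p * n, n'⁻¹ * q * n'⁆ = ⁅p, q⁆ := by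
  have he : ⁅p⁻¹, n⁻¹⁆ ∈ d.ker ⊓ M ⊓ N :=
    Subgroup.commutator_le_inf _ _
      (Subgroup.commutator_mem_commutator (inv_mem hp) (inv_mem hn))
  have hf : ⁅q⁻¹, n'⁻¹⁆ ∈ c.ker ⊓ M ⊓ N :=
    Subgroup.commutator_le_inf _ _
      (Subgroup.commutator_mem_commutator (inv_mem hq) (inv_mem hn'))
  have hed : ⁅p⁻¹, n⁻¹⁆ ∈ d.ker ⊓ N := Subgroup.mem_inf.2 ⟨he.1.1, he.2⟩
  have hfc : ⁅q⁻¹, n'⁻¹⁆ ∈ c.ker ⊓ N := Subgroup.mem_inf.2 ⟨hf.1.1, hf.2⟩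
  have hconj : ∀ a g : A, g⁻¹ * a * g = a * ⁅a⁻¹, g⁻¹⁆ := fun a g => by
    rw [commutatorElement_def]; group
  rw [hconj p, hconj q, commutatorElement_mul_mul_of_mem_ker hNM hMN hp hed hq hfc,
    commutatorElement_eq_one_iff_commute.2 (hNM _ hed _ hf.1), mul_one]

end Precrossed

theorem stmt_13_general {A : Type*} [Group A] (d c : A →* A)
    (hdd : ∀ a, d (d a) = d a) (hcc : ∀ a, c (c a) = c a)
    (M N : Subgroup A) (hMnorm : M.Normal) (hNnorm : N.Normal)
    (hdM : ∀ m ∈ M, d m ∈ M) (hcM : ∀ m ∈ M, c m ∈ M)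
    (hdN : ∀ n ∈ N, d n ∈ N) (hcN : ∀ n ∈ N, c n ∈ N)
    (hcomm₁ : ∀ k ∈ d.ker ⊓ N, ∀ l ∈ c.ker ⊓ M, Commute k l)
    (hcomm₂ : ∀ k ∈ d.ker ⊓ M, ∀ l ∈ c.ker ⊓ N, Commute k l)
    (m₁ m₂ : A) (hm₁ : m₁ ∈ M) (hm₂ : m₂ ∈ M)
    (n₁ n₂ : A) (hn₁ : n₁ ∈ N) (hn₂ : n₂ ∈ N) :
    v₀ d c (m₁ * n₁) (m₂ * n₂) = v₀ d c m₁ m₂ * v₀ d c n₁ n₂ := by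
  have hp := inv_mul_map_mem_ker_inf hdd hdM hm₁
  have hq := inv_mul_map_mem_ker_inf hcc hcM hm₂
  have hb := inv_mul_map_mem_ker_inf hdd hdN hn₁
  have hv := inv_mul_map_mem_ker_inf hcc hcN hn₂
  have hp' : n₁⁻¹ * (m₁⁻¹ * d m₁) * n₁ ∈ d.ker ⊓ M := by
    simpa using (Subgroup.normal_inf_normal d.ker M).conj_mem _ hp n₁⁻¹
  have hq' : n₂⁻¹ * (m₂⁻¹ * c m₂) * n₂ ∈ c.ker ⊓ M := by
    simpa using (Subgroup.normal_inf_normal c.ker M).conj_mem _ hq n₂⁻¹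
  rw [v₀_eq_commutatorElement, inv_mul_map_mul, inv_mul_map_mul,
    commutatorElement_mul_mul_of_mem_ker hcomm₁ hcomm₂ hp' hb hq' hv,
    commutatorElement_conj_conj_of_mem_ker hcomm₁ hcomm₂ hp hq hn₁ hn₂,
    v₀_eq_commutatorElement, v₀_eq_commutatorElement]

/-- In a precrossed-module structure `(A, d, c)`, given ideals `M` and `N` such that
`[(ker d) ∩ N, (ker c) ∩ M] = 1` and `[(ker d) ∩ M, (ker c) ∩ N] = 1`, one has
`v₀(m₁n₁, m₂n₂) = v₀(m₁, m₂) · v₀(n₁, n₂)` for all `m₁, m₂ ∈ M`, `n₁, n₂ ∈ N`. -/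
theorem stmt_13 {A : Type*} [Group A] (d c : A →* A)
    (hdd : ∀ a, d (d a) = d a) (hcd : ∀ a, c (d a) = d a)
    (hdc : ∀ a, d (c a) = c a) (hcc : ∀ a, c (c a) = c a)
    (M N : Subgroup A) (hMnorm : M.Normal) (hNnorm : N.Normal)
    (hdM : ∀ m ∈ M, d m ∈ M) (hcM : ∀ m ∈ M, c m ∈ M)
    (hdN : ∀ n ∈ N, d n ∈ N) (hcN : ∀ n ∈ N, c n ∈ N)
    (hcomm₁ : ∀ k ∈ d.ker ⊓ N, ∀ l ∈ c.ker ⊓ M, Commute k l)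
    (hcomm₂ : ∀ k ∈ d.ker ⊓ M, ∀ l ∈ c.ker ⊓ N, Commute k l)
    (m₁ m₂ : A) (hm₁ : m₁ ∈ M) (hm₂ : m₂ ∈ M)
    (n₁ n₂ : A) (hn₁ : n₁ ∈ N) (hn₂ : n₂ ∈ N) :
    v₀ d c (m₁ * n₁) (m₂ * n₂) = v₀ d c m₁ m₂ * v₀ d c n₁ n₂ :=
  stmt_13_general d c hdd hcc M N hMnorm hNnorm hdM hcM hdN hcN hcomm₁ hcomm₂ m₁ m₂ hm₁ hm₂ n₁ n₂
    hn₁ hn₂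
end

section
/- Let A be a group and d, c : A → A group homomorphisms satisfying d ∘ d = d, c ∘ d = d, d ∘ c = c and c ∘ c = c. Let M and N be normal subgroups of A with d(M) ⊆ M, c(M) ⊆ M, d(N) ⊆ N, c(N) ⊆ N. Assume that every element of (ker d) ∩ N commutes with every element of (ker c) ∩ M, and that every element of (ker d) ∩ M commutes with every element of (ker c) ∩ N. Define v₀(x, y) = x⁻¹·d(x)·y⁻¹·c(y)·d(x)⁻¹·x·c(y)⁻¹·y. Then for all m₁, m₂ ∈ M and n₁, n₂ ∈ N one has v₀(m₁·n₁, m₂·n₂) = v₀(n₁, n₂)·v₀(m₁, m₂); in particular v₀(m₁, m₂) and v₀(n₁, n₂) commute. -/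
lemma key1 {G : Type*} [Group G] (a b p q : G)
    (h1 : Commute b p) (h2 : Commute a (b*q*b⁻¹))
    (h3 : Commute (b*q*b⁻¹*q⁻¹) (a*p*a⁻¹)) :
    a*b*(p*q)*(a*b)⁻¹*(p*q)⁻¹ = (b*q*b⁻¹*q⁻¹)*(a*p*a⁻¹*p⁻¹) := by
  calc a*b*(p*q)*(a*b)⁻¹*(p*q)⁻¹
      = a*(b*p)*(q*b⁻¹*a⁻¹*q⁻¹*p⁻¹) := by group
    _ = a*(p*b)*(q*b⁻¹*a⁻¹*q⁻¹*p⁻¹) := by rw [h1.eq]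
    _ = a*p*((b*q*b⁻¹)*a⁻¹)*(q⁻¹*p⁻¹) := by group
    _ = a*p*(a⁻¹*(b*q*b⁻¹))*(q⁻¹*p⁻¹) := by rw [← h2.inv_left.eq]
    _ = (a*p*a⁻¹)*(b*q*b⁻¹*q⁻¹)*p⁻¹ := by group
    _ = (b*q*b⁻¹*q⁻¹)*(a*p*a⁻¹)*p⁻¹ := by rw [← h3.eq]
    _ = (b*q*b⁻¹*q⁻¹)*(a*p*a⁻¹*p⁻¹) := by group

lemma key2 {G : Type*} [Group G] (u s w t : G)
    (h4 : Commute s w) (h5 : Commute s t) (h6 : Commute u t) :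
    u*s*(w*t)*(u*s)⁻¹*(w*t)⁻¹ = u*w*u⁻¹*w⁻¹ := by
  calc u*s*(w*t)*(u*s)⁻¹*(w*t)⁻¹
      = u*(s*w)*(t*s⁻¹*u⁻¹*t⁻¹*w⁻¹) := by group
    _ = u*(w*s)*(t*s⁻¹*u⁻¹*t⁻¹*w⁻¹) := by rw [h4.eq]
    _ = u*w*(s*t)*(s⁻¹*u⁻¹*t⁻¹*w⁻¹) := by group
    _ = u*w*(t*s)*(s⁻¹*u⁻¹*t⁻¹*w⁻¹) := by rw [h5.eq]
    _ = u*w*(t*u⁻¹)*(t⁻¹*w⁻¹) := by group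
    _ = u*w*(u⁻¹*t)*(t⁻¹*w⁻¹) := by rw [← h6.inv_left.eq]
    _ = u*w*u⁻¹*w⁻¹ := by group

/-- In a precrossed-module structure `(A, d, c)`, given ideals `M` and `N` such that
`[(ker d) ∩ N, (ker c) ∩ M] = 1` and `[(ker d) ∩ M, (ker c) ∩ N] = 1`, one has
`v₀(m₁n₁, m₂n₂) = v₀(n₁, n₂) · v₀(m₁, m₂)` for all `m₁, m₂ ∈ M`, `n₁, n₂ ∈ N`;
in particular `v₀(m₁, m₂)` and `v₀(n₁, n₂)` commute. -/
theorem stmt_14 {A : Type*} [Group A] (d c : A →* A)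
    (hdd : ∀ a, d (d a) = d a) (hcd : ∀ a, c (d a) = d a)
    (hdc : ∀ a, d (c a) = c a) (hcc : ∀ a, c (c a) = c a)
    (M N : Subgroup A) (hMnorm : M.Normal) (hNnorm : N.Normal)
    (hdM : ∀ m ∈ M, d m ∈ M) (hcM : ∀ m ∈ M, c m ∈ M)
    (hdN : ∀ n ∈ N, d n ∈ N) (hcN : ∀ n ∈ N, c n ∈ N)
    (hcomm₁ : ∀ k ∈ d.ker ⊓ N, ∀ l ∈ c.ker ⊓ M, Commute k l)
    (hcomm₂ : ∀ k ∈ d.ker ⊓ M, ∀ l ∈ c.ker ⊓ N, Commute k l)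
    (m₁ m₂ : A) (hm₁ : m₁ ∈ M) (hm₂ : m₂ ∈ M)
    (n₁ n₂ : A) (hn₁ : n₁ ∈ N) (hn₂ : n₂ ∈ N) :
    v₀ d c (m₁ * n₁) (m₂ * n₂) = v₀ d c n₁ n₂ * v₀ d c m₁ m₂ ∧
      Commute (v₀ d c m₁ m₂) (v₀ d c n₁ n₂) := by
  have hv : ∀ x y : A, v₀ (⇑d) (⇑c) x y
      = (x⁻¹ * d x) * (y⁻¹ * c y) * (x⁻¹ * d x)⁻¹ * (y⁻¹ * c y)⁻¹ := by
    intro x y; simp only [v₀]; group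
  set u : A := m₁⁻¹ * d m₁ with hu_def
  set b : A := n₁⁻¹ * d n₁ with hb_def
  set w : A := m₂⁻¹ * c m₂ with hw_def
  set q : A := n₂⁻¹ * c n₂ with hq_def
  set a : A := n₁⁻¹ * u * n₁ with ha_def
  set p : A := n₂⁻¹ * w * n₂ with hp_def
  set s : A := u⁻¹ * a with hs_def
  set t : A := w⁻¹ * p with ht_def
  -- kernel facts
  have hdu : d u = 1 := by rw [hu_def]; simp [hdd]
  have hdb : d b = 1 := by rw [hb_def]; simp [hdd]
  have hcw : c w = 1 := by rw [hw_def]; simp [hcc]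
  have hcq : c q = 1 := by rw [hq_def]; simp [hcc]
  have hda : d a = 1 := by rw [ha_def]; simp [hdu]
  have hcp : c p = 1 := by rw [hp_def]; simp [hcw]
  have hds : d s = 1 := by rw [hs_def]; simp [hdu, hda]
  have hct : c t = 1 := by rw [ht_def]; simp [hcw, hcp]
  -- memberships
  have huM : u ∈ M := mul_mem (inv_mem hm₁) (hdM _ hm₁)
  have hbN : b ∈ N := mul_mem (inv_mem hn₁) (hdN _ hn₁)
  have hwM : w ∈ M := mul_mem (inv_mem hm₂) (hcM _ hm₂)
  have hqN : q ∈ N := mul_mem (inv_mem hn₂) (hcN _ hn₂)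
  have haM : a ∈ M := by
    have := hMnorm.conj_mem u huM n₁⁻¹
    simpa [ha_def, mul_assoc] using this
  have hpM : p ∈ M := by
    have := hMnorm.conj_mem w hwM n₂⁻¹
    simpa [hp_def, mul_assoc] using this
  have hsM : s ∈ M := mul_mem (inv_mem huM) haM
  have htM : t ∈ M := mul_mem (inv_mem hwM) hpM
  have hsN : s ∈ N := by
    have h : s = (u⁻¹ * n₁⁻¹ * u) * n₁ := by rw [hs_def, ha_def]; group
    rw [h]
    exact mul_mem (by simpa [mul_assoc] using hNnorm.conj_mem n₁⁻¹ (inv_mem hn₁) u⁻¹) hn₁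
  have htN : t ∈ N := by
    have h : t = (w⁻¹ * n₂⁻¹ * w) * n₂ := by rw [ht_def, hp_def]; group
    rw [h]
    exact mul_mem (by simpa [mul_assoc] using hNnorm.conj_mem n₂⁻¹ (inv_mem hn₂) w⁻¹) hn₂
  -- commuting facts
  have h1 : Commute b p := hcomm₁ b ⟨hdb, hbN⟩ p ⟨hcp, hpM⟩
  have h2 : Commute a (b*q*b⁻¹) := by
    refine hcomm₂ a ⟨hda, haM⟩ _ ⟨?_, ?_⟩
    · show c (b*q*b⁻¹) = 1; simp [hcq]
    · exact N.mul_mem (N.mul_mem hbN hqN) (N.inv_mem hbN)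
  have h3 : Commute (b*q*b⁻¹*q⁻¹) (a*p*a⁻¹) := by
    refine hcomm₁ _ ⟨?_, ?_⟩ _ ⟨?_, ?_⟩
    · show d (b*q*b⁻¹*q⁻¹) = 1; simp [hdb]
    · exact N.mul_mem (N.mul_mem (N.mul_mem hbN hqN) (N.inv_mem hbN)) (N.inv_mem hqN)
    · show c (a*p*a⁻¹) = 1; simp [hcp]
    · exact M.mul_mem (M.mul_mem haM hpM) (M.inv_mem haM)
  have h4 : Commute s w := hcomm₁ s ⟨hds, hsN⟩ w ⟨hcw, hwM⟩
  have h5 : Commute s t := hcomm₂ s ⟨hds, hsM⟩ t ⟨hct, htN⟩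
  have h6 : Commute u t := hcomm₂ u ⟨hdu, huM⟩ t ⟨hct, htN⟩
  have hfin : Commute (b*q*b⁻¹*q⁻¹) (u*w*u⁻¹*w⁻¹) := by
    refine hcomm₁ _ ⟨?_, ?_⟩ _ ⟨?_, ?_⟩
    · show d (b*q*b⁻¹*q⁻¹) = 1; simp [hdb]
    · exact N.mul_mem (N.mul_mem (N.mul_mem hbN hqN) (N.inv_mem hbN)) (N.inv_mem hqN)
    · show c (u*w*u⁻¹*w⁻¹) = 1; simp [hcw]
    · exact M.mul_mem (M.mul_mem (M.mul_mem huM hwM) (M.inv_mem huM)) (M.inv_mem hwM)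
  -- rewriting v₀
  have hvm : v₀ (⇑d) (⇑c) m₁ m₂ = u*w*u⁻¹*w⁻¹ := by
    rw [hv, ← hu_def, ← hw_def]
  have hvn : v₀ (⇑d) (⇑c) n₁ n₂ = b*q*b⁻¹*q⁻¹ := by
    rw [hv, ← hb_def, ← hq_def]
  have hx : (m₁*n₁)⁻¹ * d (m₁*n₁) = a * b := by
    rw [ha_def, hb_def, hu_def, map_mul]; group
  have hy : (m₂*n₂)⁻¹ * c (m₂*n₂) = p * q := by
    rw [hp_def, hq_def, hw_def, map_mul]; group
  have hau : a = u * s := by rw [hs_def]; group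
  have hpw : p = w * t := by rw [ht_def]; group
  constructor
  · calc v₀ (⇑d) (⇑c) (m₁*n₁) (m₂*n₂)
        = a*b*(p*q)*(a*b)⁻¹*(p*q)⁻¹ := by rw [hv, hx, hy]
      _ = (b*q*b⁻¹*q⁻¹)*(a*p*a⁻¹*p⁻¹) := key1 a b p q h1 h2 h3
      _ = (b*q*b⁻¹*q⁻¹)*(u*s*(w*t)*(u*s)⁻¹*(w*t)⁻¹) := by rw [hau, hpw]
      _ = (b*q*b⁻¹*q⁻¹)*(u*w*u⁻¹*w⁻¹) := by rw [key2 u s w t h4 h5 h6]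
      _ = v₀ (⇑d) (⇑c) n₁ n₂ * v₀ (⇑d) (⇑c) m₁ m₂ := by rw [hvm, hvn]
  · rw [hvm, hvn]; exact hfin.symm
end

section
/- Let A be a group and d, c : A → A group homomorphisms satisfying d ∘ d = d, c ∘ d = d, d ∘ c = c and c ∘ c = c. Let M and N be normal subgroups of A with d(M) ⊆ M, c(M) ⊆ M, d(N) ⊆ N, c(N) ⊆ N. Assume that every element of (ker d) ∩ M commutes with every element of (ker c) ∩ N. Then for all p₁, p₂ ∈ M ∩ N one has v₀(p₁, p₂) = 1, where v₀(x, y) = x⁻¹·d(x)·y⁻¹·c(y)·d(x)⁻¹·x·c(y)⁻¹·y. -/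
/-- In a precrossed-module structure `(A, d, c)`, given ideals `M` and `N` such that
`[(ker d) ∩ M, (ker c) ∩ N] = 1`, one has `v₀(p₁, p₂) = 1` for all `p₁, p₂ ∈ M ∩ N`. -/
theorem stmt_15 {A : Type*} [Group A] (d c : A →* A)
    (hdd : ∀ a, d (d a) = d a) (hcd : ∀ a, c (d a) = d a)
    (hdc : ∀ a, d (c a) = c a) (hcc : ∀ a, c (c a) = c a)
    (M N : Subgroup A) (hMnorm : M.Normal) (hNnorm : N.Normal)
    (hdM : ∀ m ∈ M, d m ∈ M) (hcM : ∀ m ∈ M, c m ∈ M)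
    (hdN : ∀ n ∈ N, d n ∈ N) (hcN : ∀ n ∈ N, c n ∈ N)
    (hcomm : ∀ k ∈ d.ker ⊓ M, ∀ l ∈ c.ker ⊓ N, Commute k l)
    (p₁ p₂ : A) (hp₁ : p₁ ∈ M ⊓ N) (hp₂ : p₂ ∈ M ⊓ N) :
    v₀ d c p₁ p₂ = 1 := by
  set a := p₁⁻¹ * d p₁ with ha
  set b := p₂⁻¹ * c p₂ with hb
  have hka : a ∈ d.ker ⊓ M := by
    constructor
    · simp [MonoidHom.mem_ker, ha, hdd]
    · exact M.mul_mem (M.inv_mem hp₁.1) (hdM _ hp₁.1)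
  have hkb : b ∈ c.ker ⊓ N := by
    constructor
    · simp [MonoidHom.mem_ker, hb, hcc]
    · exact N.mul_mem (N.inv_mem hp₂.2) (hcN _ hp₂.2)
  have h := hcomm a hka b hkb
  have : v₀ d c p₁ p₂ = a * b * a⁻¹ * b⁻¹ := by
    simp [v₀, ha, hb, mul_assoc]
  rw [this, h.eq]
  group
end

section
/- Let A be a group, d, c : A → A group homomorphisms, and M, N subgroups of A. Define v₀(x, y) = x⁻¹·d(x)·y⁻¹·c(y)·d(x)⁻¹·x·c(y)⁻¹·y. If v₀(m, n) = 1 for all m ∈ M and n ∈ N, then every element of (ker d) ∩ M commutes with every element of (ker c) ∩ N. -/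
/-- Let `d, c : A → A` be group endomorphisms and `M`, `N` subgroups of `A`.
If `v₀(m, n) = 1` for all `m ∈ M` and `n ∈ N`, then every element of
`(ker d) ∩ M` commutes with every element of `(ker c) ∩ N`. -/
theorem stmt_16 {A : Type*} [Group A] (d c : A →* A) (M N : Subgroup A)
    (hv : ∀ m ∈ M, ∀ n ∈ N, v₀ d c m n = 1) :
    ∀ k ∈ d.ker ⊓ M, ∀ l ∈ c.ker ⊓ N, Commute k l := by
  rintro k ⟨hkd, hkM⟩ l ⟨hlc, hlN⟩
  have hv' := hv k hkM l hlN
  simp only [v₀, MonoidHom.mem_ker.mp hkd, MonoidHom.mem_ker.mp hlc,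
    mul_one, one_mul, inv_one] at hv'
  have : k⁻¹ * l⁻¹ * k * l = 1 := by group at hv' ⊢; exact hv'
  have h := congrArg (fun z => l * k * z) this
  simpa [mul_assoc, Commute, SemiconjBy] using h
end
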